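/- arXiv:2511.18179 — 2 statements merged into one kernel-verified Lean document; each statement's English description precedes it below -/
import Mathlib

section
/- Let 𝔅_{ab}, 𝔅_{ba}, 𝔅_{bb} be real numbers with 𝔅_{ab} ≠ 0, let μ be a nonzero real number, and assume −𝔅_{bb}² − 𝔅_{ab}·𝔅_{ba} = μ^{−2}. Set e_a = 1/(2i) and e_b = (−i·𝔅_{bb} − 1)/(2·𝔅_{ab}). Then e_a·𝔅_{ba} + e_b·(𝔅_{bb} + i) = i(1 − μ²)/(2μ²·𝔅_{ab}). Consequently, if (μ_n) is a sequence of nonzero reals with μ_n → 1 and the corresponding real numbers 𝔅_{ab,n} satisfy |𝔅_{ab,n}| ≥ δ for some fixed δ > 0, then the corresponding quantities e_{a,n}·𝔅_{ba,n} + e_{b,n}·(𝔅_{bb,n} + i) tend to 0. -/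
/-!
Expanding, `e_a 𝔅_{ba} + e_b (𝔅_{bb} + i) = -i (1 + 𝔅_{bb}² + 𝔅_{ab} 𝔅_{ba}) / (2 𝔅_{ab})
= -i (1 - det 𝔅) / (2 𝔅_{ab})`, and `det 𝔅 = μ⁻²` gives the closed form. Since
`det 𝔅 > 0` while `-𝔅_{bb}² ≤ 0`, the entry `𝔅_{ab}` can never vanish. In the limit the
closed form is `i (1 - μ²) / (2 μ²)`, which tends to `0`, times `𝔅_{ab}⁻¹`, which is bounded
by `δ⁻¹`.
-/

open Complex Filter Topology

/-- `e_a 𝔅_{ba} + e_b (𝔅_{bb} + i)` with `e_a = 1 / (2i)` and `e_b = (-i 𝔅_{bb} - 1) / (2 𝔅_{ab})`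
as in formula (8). -/
noncomputable def bPeriodOffDiag (Bab Bba Bbb : ℝ) : ℂ :=
  (1 / (2 * I)) * (Bba : ℂ) + ((-I * (Bbb : ℂ) - 1) / (2 * (Bab : ℂ))) * ((Bbb : ℂ) + I)

theorem bPeriodOffDiag_eq {Bab : ℝ} (hBab : Bab ≠ 0) (Bba Bbb : ℝ) :
    bPeriodOffDiag Bab Bba Bbb = -I * (1 + Bbb ^ 2 + Bab * Bba) / (2 * Bab) := by
  have hBab' : (Bab : ℂ) ≠ 0 := ofReal_ne_zero.2 hBab
  unfold bPeriodOffDiag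
  field_simp
  linear_combination (Bab * Bba - I * Bbb) * I_sq

theorem ne_zero_of_neg_sq_sub_mul_pos {a b c : ℝ} (h : 0 < -b ^ 2 - a * c) : a ≠ 0 := by
  rintro rfl
  nlinarith [sq_nonneg b]

theorem bPeriodOffDiag_eq_of_det {Bab Bba Bbb μ : ℝ} (hμ : μ ≠ 0)
    (hdet : -Bbb ^ 2 - Bab * Bba = (μ ^ 2)⁻¹) :
    bPeriodOffDiag Bab Bba Bbb = I * (1 - (μ : ℂ) ^ 2) / (2 * (μ : ℂ) ^ 2 * Bab) := by
  have hBab : Bab ≠ 0 := ne_zero_of_neg_sq_sub_mul_pos (c := Bba) (by rw [hdet]; positivity)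
  have hμ' : (μ : ℂ) ≠ 0 := ofReal_ne_zero.2 hμ
  have hdet' : (-(Bbb : ℂ) ^ 2 - Bab * Bba) * μ ^ 2 = 1 := by
    rw [show -(Bbb : ℂ) ^ 2 - Bab * Bba = ((μ : ℂ) ^ 2)⁻¹ from mod_cast hdet]
    exact inv_mul_cancel₀ (pow_ne_zero 2 hμ')
  have hBab' : (Bab : ℂ) ≠ 0 := ofReal_ne_zero.2 hBab
  rw [bPeriodOffDiag_eq hBab]
  field_simp
  linear_combination hdet'

theorem tendsto_bPeriodOffDiag {μs Babs Bbas Bbbs : ℕ → ℝ} {δ : ℝ} (hδ : 0 < δ)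
    (hμs : ∀ n, μs n ≠ 0) (hμlim : Tendsto μs atTop (𝓝 1)) (hBabs : ∀ n, δ ≤ |Babs n|)
    (hdet : ∀ n, -(Bbbs n) ^ 2 - Babs n * Bbas n = ((μs n) ^ 2)⁻¹) :
    Tendsto (fun n => bPeriodOffDiag (Babs n) (Bbas n) (Bbbs n)) atTop (𝓝 0) := by
  simp only [bPeriodOffDiag_eq_of_det (hμs _) (hdet _), div_mul_eq_div_div _ _ (Babs _ : ℂ),
    div_eq_mul_inv _ (Babs _ : ℂ)]
  refine Tendsto.zero_mul_isBoundedUnder_le ?_ (isBoundedUnder_of ⟨δ⁻¹, fun n => ?_⟩)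
  · have hμC : Tendsto (fun n => (μs n : ℂ)) atTop (𝓝 1) :=
      (continuous_ofReal.tendsto' 1 1 ofReal_one).comp hμlim
    have := (tendsto_const_nhds (x := I)).mul ((tendsto_const_nhds (x := (1 : ℂ))).sub (hμC.pow 2))
      |>.div ((hμC.pow 2).const_mul 2) (by norm_num)
    rwa [one_pow, sub_self, mul_zero, zero_div] at this
  · simpa using inv_anti₀ hδ (hBabs n)

theorem stmt3_general (Bab Bba Bbb : ℝ) (μ : ℝ) (hμ : μ ≠ 0)
    (hdet : -Bbb ^ 2 - Bab * Bba = (μ ^ 2)⁻¹) :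
    ((1 / (2 * Complex.I)) * (Bba : ℂ)
        + ((-Complex.I * (Bbb : ℂ) - 1) / (2 * (Bab : ℂ))) * ((Bbb : ℂ) + Complex.I)
      = Complex.I * (1 - (μ : ℂ) ^ 2) / (2 * (μ : ℂ) ^ 2 * (Bab : ℂ)))
    ∧ ∀ (μs Babs Bbas Bbbs : ℕ → ℝ) (δ : ℝ), 0 < δ →
        (∀ n, μs n ≠ 0) →
        Tendsto μs atTop (nhds 1) →
        (∀ n, δ ≤ |Babs n|) →
        (∀ n, -(Bbbs n) ^ 2 - Babs n * Bbas n = ((μs n) ^ 2)⁻¹) →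
        Tendsto (fun n =>
            (1 / (2 * Complex.I)) * (Bbas n : ℂ)
              + ((-Complex.I * (Bbbs n : ℂ) - 1) / (2 * (Babs n : ℂ)))
                * ((Bbbs n : ℂ) + Complex.I))
          atTop (nhds 0) := by
  exact ⟨bPeriodOffDiag_eq_of_det hμ hdet, fun _ _ _ _ _ hδ => tendsto_bPeriodOffDiag hδ⟩

/-- The off-diagonal entry of the `b`-period matrix `𝔹` in formula (9) of the
paper, and its vanishing in the limit `μ → 1`. Here `𝔅_{aa} = -𝔅_{bb}` and
`det 𝔅 = 𝔅_{aa}𝔅_{bb} - 𝔅_{ab}𝔅_{ba} = -𝔅_{bb}² - 𝔅_{ab}𝔅_{ba} = μ⁻²`. -/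
theorem stmt3 (Bab Bba Bbb : ℝ) (hBab : Bab ≠ 0) (μ : ℝ) (hμ : μ ≠ 0)
    (hdet : -Bbb ^ 2 - Bab * Bba = (μ ^ 2)⁻¹) :
    ((1 / (2 * Complex.I)) * (Bba : ℂ)
        + ((-Complex.I * (Bbb : ℂ) - 1) / (2 * (Bab : ℂ))) * ((Bbb : ℂ) + Complex.I)
      = Complex.I * (1 - (μ : ℂ) ^ 2) / (2 * (μ : ℂ) ^ 2 * (Bab : ℂ)))
    ∧ ∀ (μs Babs Bbas Bbbs : ℕ → ℝ) (δ : ℝ), 0 < δ →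
        (∀ n, μs n ≠ 0) →
        Tendsto μs atTop (nhds 1) →
        (∀ n, δ ≤ |Babs n|) →
        (∀ n, -(Bbbs n) ^ 2 - Babs n * Bbas n = ((μs n) ^ 2)⁻¹) →
        Tendsto (fun n =>
            (1 / (2 * Complex.I)) * (Bbas n : ℂ)
              + ((-Complex.I * (Bbbs n : ℂ) - 1) / (2 * (Babs n : ℂ)))
                * ((Bbbs n : ℂ) + Complex.I))
          atTop (nhds 0) :=
  stmt3_general Bab Bba Bbb μ hμ hdet
end

section
/- Let τ ∈ ℂ with Im τ > 0 and let a, b ∈ {0, 1/2} with (a, b) ≠ (1/2, 1/2). Then Σ_{n∈ℤ} exp(πi·(n + a)²·τ + 2πi·(n + a)·b) ≠ 0. -/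
open Complex

open scoped Real

noncomputable section

namespace Stmt7





lemma term_eq_theta3 (n : ℤ) (τ : ℂ) : jacobiTheta₂_term n 0 τ = cexp (π * I * n ^ 2 * τ) := by
  simp [jacobiTheta₂_term]

lemma summable_norm_term {z τ : ℂ} (hz : z.im = 0) (hτ : 0 < τ.im) :
    Summable fun n : ℤ => ‖jacobiTheta₂_term n z τ‖ := by
  have hr0 : (0:ℝ) ≤ Real.exp (-π * τ.im) := (Real.exp_pos _).le
  have hr1 : Real.exp (-π * τ.im) < 1 :=
    Real.exp_lt_one_iff.mpr (mul_neg_of_neg_of_pos (neg_lt_zero.mpr Real.pi_pos) hτ)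
  refine Summable.of_nonneg_of_le (f := fun n : ℤ => Real.exp (-π * τ.im) ^ n.natAbs)
    (fun n => norm_nonneg _) (fun n => ?_) ?_
  · have h1 : ‖jacobiTheta₂_term n z τ‖ = ‖cexp (π * I * n ^ 2 * τ)‖ := by
      rw [← term_eq_theta3, norm_jacobiTheta₂_term, norm_jacobiTheta₂_term, hz, zero_im]
    rw [h1]
    exact norm_exp_mul_sq_le hτ n
  · refine Summable.of_nat_of_neg ?_ ?_ <;>
      simpa using (summable_geometric_of_lt_one hr0 hr1)

lemma summable_term {z τ : ℂ} (hz : z.im = 0) (hτ : 0 < τ.im) :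
    Summable fun n : ℤ => jacobiTheta₂_term n z τ :=
  (summable_norm_term hz hτ).of_norm

lemma term_identity (τ : ℂ) (m n : ℤ) :
    jacobiTheta₂_term (m + n) 0 τ * jacobiTheta₂_term (m - n) (1/2) τ
      = jacobiTheta₂_term m (1/2) (2 * τ) * jacobiTheta₂_term n (1/2) (2 * τ) := by
  simp only [jacobiTheta₂_term, ← Complex.exp_add]
  rw [show 2 * ↑π * I * ↑(m + n) * 0 + ↑π * I * ↑(m + n) ^ 2 * τ +
      (2 * ↑π * I * ↑(m - n) * (1/2) + ↑π * I * ↑(m - n) ^ 2 * τ)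
      = (2 * ↑π * I * ↑m * (1/2) + ↑π * I * ↑m ^ 2 * (2 * τ) +
        (2 * ↑π * I * ↑n * (1/2) + ↑π * I * ↑n ^ 2 * (2 * τ))) + (-n : ℤ) * (2 * π * I) by
    push_cast; ring]
  rw [Complex.exp_add, Complex.exp_int_mul_two_pi_mul_I, mul_one]

lemma term_neg (τ : ℂ) (n : ℤ) :
    jacobiTheta₂_term (-n) (1/2) τ = jacobiTheta₂_term n (1/2) τ := by
  simp only [jacobiTheta₂_term]
  rw [show 2 * ↑π * I * ↑(-n) * (1/2) + ↑π * I * ↑(-n) ^ 2 * τ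
      = (2 * ↑π * I * ↑n * (1/2) + ↑π * I * ↑n ^ 2 * τ) + (-n : ℤ) * (2 * π * I) by
    push_cast; ring]
  rw [Complex.exp_add, Complex.exp_int_mul_two_pi_mul_I, mul_one]









lemma term_swap (τ : ℂ) {j k : ℤ} (h : ¬ Even (j + k)) :
    jacobiTheta₂_term k 0 τ * jacobiTheta₂_term j (1/2) τ
      = - (jacobiTheta₂_term j 0 τ * jacobiTheta₂_term k (1/2) τ) := by
  obtain ⟨l, hl⟩ : ∃ l, j = 2 * l + 1 + k := by
    rcases Int.even_or_odd (j - k) with ⟨m, hm⟩ | ⟨m, hm⟩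
    · exact absurd ⟨m + k, by omega⟩ h
    · exact ⟨m, by omega⟩
  have hc : (j : ℂ) = 2 * (l : ℂ) + 1 + (k : ℂ) := by exact_mod_cast congrArg (Int.cast : ℤ → ℂ) hl
  simp only [jacobiTheta₂_term, ← Complex.exp_add]
  rw [show 2 * ↑π * I * ↑k * 0 + ↑π * I * ↑k ^ 2 * τ +
      (2 * ↑π * I * ↑j * (1/2) + ↑π * I * ↑j ^ 2 * τ)
      = (2 * ↑π * I * ↑j * 0 + ↑π * I * ↑j ^ 2 * τ +
        (2 * ↑π * I * ↑k * (1/2) + ↑π * I * ↑k ^ 2 * τ)) + (l : ℂ) * (2 * ↑π * I) + ↑π * I by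
    rw [hc]; ring]
  rw [Complex.exp_add, Complex.exp_add, Complex.exp_int_mul_two_pi_mul_I,
    Complex.exp_pi_mul_I, mul_one, mul_neg_one]

set_option maxHeartbeats 1000000 in
lemma key_identity {τ : ℂ} (hτ : 0 < τ.im) :
    jacobiTheta₂ 0 τ * jacobiTheta₂ (1/2) τ = jacobiTheta₂ (1/2) (2 * τ) ^ 2 := by
  have h2τ : 0 < (2 * τ).im := by
    have : (2 * τ).im = 2 * τ.im := by simp
    rw [this]; positivity
  set F : ℤ × ℤ → ℂ := fun p => jacobiTheta₂_term p.1 0 τ * jacobiTheta₂_term p.2 (1/2) τ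
    with hF
  have hnorm0 := summable_norm_term (z := 0) (by simp) hτ
  have hnormh := summable_norm_term (z := (1/2 : ℂ)) (by simp) hτ
  have hFnorm : Summable fun p : ℤ × ℤ =>
      ‖jacobiTheta₂_term p.1 0 τ‖ * ‖jacobiTheta₂_term p.2 (1/2) τ‖ :=
    hnorm0.mul_of_nonneg hnormh (fun _ => norm_nonneg _) (fun _ => norm_nonneg _)
  have hL : jacobiTheta₂ 0 τ * jacobiTheta₂ (1/2) τ = ∑' p : ℤ × ℤ, F p :=
    tsum_mul_tsum_of_summable_norm hnorm0 hnormh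
  have hnorm2 := summable_norm_term (z := (1/2 : ℂ)) (by simp) h2τ
  have hR : jacobiTheta₂ (1/2) (2 * τ) ^ 2 = ∑' p : ℤ × ℤ,
      jacobiTheta₂_term p.1 (1/2) (2 * τ) * jacobiTheta₂_term p.2 (1/2) (2 * τ) := by
    rw [sq]; exact tsum_mul_tsum_of_summable_norm hnorm2 hnorm2
  set G : ℤ × ℤ → ℂ := fun p => if Even (p.1 + p.2) then F p else 0 with hG
  set H : ℤ × ℤ → ℂ := fun p => if Even (p.1 + p.2) then 0 else F p with hH
  have hGsum : Summable G := by
    apply Summable.of_norm_bounded hFnorm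
    intro p
    simp only [hG]
    split
    · exact le_of_eq (norm_mul _ _)
    · simp only [norm_zero]; positivity
  have hHsum : Summable H := by
    apply Summable.of_norm_bounded hFnorm
    intro p
    simp only [hH]
    split
    · simp only [norm_zero]; positivity
    · exact le_of_eq (norm_mul _ _)
  have hH0 : ∑' p, H p = 0 := by
    have hswap : ∀ p : ℤ × ℤ, H ((Equiv.prodComm ℤ ℤ) p) = - H p := by
      rintro ⟨j, k⟩
      by_cases he : Even (j + k)
      · have he' : Even (k + j) := by rwa [add_comm]
        simp [hH, he, he']
      · have he' : ¬ Even (k + j) := by rwa [add_comm]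
        simp only [hH, Equiv.prodComm_apply, Prod.swap_prod_mk, if_neg he, if_neg he']
        exact term_swap τ he
    have h1 : ∑' p, H p = - ∑' p, H p := by
      conv_lhs => rw [← (Equiv.prodComm ℤ ℤ).tsum_eq H]
      rw [tsum_congr hswap, tsum_neg]
    have h2 : (2 : ℂ) * ∑' p, H p = 0 := by linear_combination h1
    exact (mul_eq_zero.mp h2).resolve_left two_ne_zero
  have hFGH : ∀ p, F p = G p + H p := by
    intro p
    simp only [hG, hH]
    split <;> simp
  have hinj : Function.Injective (fun p : ℤ × ℤ => ((p.1 + p.2, p.1 - p.2) : ℤ × ℤ)) := by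
    rintro ⟨a1, a2⟩ ⟨b1, b2⟩ hab
    simp only [Prod.mk.injEq] at hab ⊢
    omega
  have hsupp : Function.support G ⊆
      Set.range (fun p : ℤ × ℤ => ((p.1 + p.2, p.1 - p.2) : ℤ × ℤ)) := by
    rintro ⟨j, k⟩ hp
    have he : Even (j + k) := by
      by_contra hne
      exact hp (by simp [hG, hne])
    obtain ⟨r, hr⟩ := he
    exact ⟨(r, j - r), by simp only [Prod.mk.injEq]; omega⟩
  have hGtsum : ∑' p : ℤ × ℤ, G p = ∑' p : ℤ × ℤ,
      jacobiTheta₂_term p.1 (1/2) (2 * τ) * jacobiTheta₂_term p.2 (1/2) (2 * τ) := by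
    rw [← hinj.tsum_eq hsupp]
    refine tsum_congr fun p => ?_
    have he : Even ((p.1 + p.2) + (p.1 - p.2)) := ⟨p.1, by ring⟩
    simp only [hG, hF, if_pos he]
    exact term_identity τ p.1 p.2
  rw [hL, hR, ← hGtsum, tsum_congr hFGH, Summable.tsum_add hGsum hHsum, hH0, add_zero]











lemma norm_term_half_le {τ : ℂ} (hτ : 0 < τ.im) (n : ℤ) :
    ‖jacobiTheta₂_term n (1/2) τ‖ ≤ Real.exp (-π * τ.im) ^ n.natAbs := by
  have h1 : ‖jacobiTheta₂_term n (1/2) τ‖ = ‖cexp (π * I * n ^ 2 * τ)‖ := by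
    rw [← term_eq_theta3, norm_jacobiTheta₂_term, norm_jacobiTheta₂_term]
    norm_num
  rw [h1]
  exact norm_exp_mul_sq_le hτ n

lemma theta4_norm_sub_one {τ : ℂ} (hτ : 0 < τ.im) :
    ‖jacobiTheta₂ (1/2) τ - 1‖ ≤ 2 / (1 - Real.exp (-π * τ.im)) * Real.exp (-π * τ.im) := by
  set r := Real.exp (-π * τ.im) with hrdef
  have hr0 : 0 < r := Real.exp_pos _
  have hr1 : r < 1 :=
    Real.exp_lt_one_iff.mpr (mul_neg_of_neg_of_pos (neg_lt_zero.mpr Real.pi_pos) hτ)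
  have h0 : jacobiTheta₂_term (0 : ℤ) (1/2) τ = 1 := by
    simp [jacobiTheta₂_term]
  have hs0 := hasSum_jacobiTheta₂_term (1/2 : ℂ) hτ
  have h1 := hs0.nat_add_neg
  simp only [term_neg, h0] at h1
  rw [← hasSum_nat_add_iff' 1] at h1
  simp only [Finset.sum_range_one, Nat.cast_zero, h0] at h1
  have h2 : HasSum (fun n : ℕ => 2 * jacobiTheta₂_term (n + 1 : ℕ) (1/2) τ)
      (jacobiTheta₂ (1/2) τ - 1) := by
    have hv : jacobiTheta₂ (1/2) τ - 1 = jacobiTheta₂ (1/2) τ + 1 - (1 + 1) := by ring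
    rw [hv]
    simpa [two_mul] using h1
  have hgeom : HasSum (fun n : ℕ => 2 * r ^ (n + 1)) (2 / (1 - r) * r) := by
    have hg := (hasSum_geometric_of_lt_one hr0.le hr1).mul_left (2 * r)
    have e1 : (fun n : ℕ => 2 * r ^ (n + 1)) = fun n : ℕ => 2 * r * r ^ n := by
      funext n; ring
    have e2 : 2 / (1 - r) * r = 2 * r * (1 - r)⁻¹ := by
      field_simp
    rw [e1, e2]; exact hg
  have hb : ∀ n : ℕ, ‖2 * jacobiTheta₂_term (n + 1 : ℕ) (1/2) τ‖ ≤ 2 * r ^ (n + 1) := by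
    intro n
    rw [norm_mul, Complex.norm_ofNat]
    have := norm_term_half_le hτ (n + 1 : ℕ)
    have hna : ((n : ℤ) + 1).natAbs = n + 1 := by omega
    rw [show ((n + 1 : ℕ) : ℤ) = (n : ℤ) + 1 by push_cast; ring] at this ⊢
    rw [hna] at this
    nlinarith [norm_nonneg (jacobiTheta₂_term ((n : ℤ) + 1) (1/2) τ)]
  have hsum : Summable fun n : ℕ => ‖2 * jacobiTheta₂_term (n + 1 : ℕ) (1/2) τ‖ :=
    Summable.of_nonneg_of_le (fun n => norm_nonneg _) hb hgeom.summable
  calc ‖jacobiTheta₂ (1/2) τ - 1‖ = ‖∑' n : ℕ, 2 * jacobiTheta₂_term (n + 1 : ℕ) (1/2) τ‖ := by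
        rw [h2.tsum_eq]
    _ ≤ ∑' n : ℕ, ‖2 * jacobiTheta₂_term (n + 1 : ℕ) (1/2) τ‖ := norm_tsum_le_tsum_norm hsum
    _ ≤ ∑' n : ℕ, 2 * r ^ (n + 1) := Summable.tsum_mono hsum hgeom.summable hb
    _ = 2 / (1 - r) * r := hgeom.tsum_eq

lemma theta4_ne_zero_of_one_le {τ : ℂ} (h1 : 1 ≤ τ.im) : jacobiTheta₂ (1/2) τ ≠ 0 := by
  have hτ : 0 < τ.im := lt_of_lt_of_le one_pos h1
  intro h
  have hb := theta4_norm_sub_one hτ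
  rw [h, zero_sub, norm_neg, norm_one] at hb
  set r := Real.exp (-π * τ.im) with hrdef
  have hr0 : 0 < r := Real.exp_pos _
  have hr : r ≤ 1/4 := by
    have h3 : (3 : ℝ) ≤ π * τ.im := by nlinarith [Real.pi_gt_three]
    have : r ≤ Real.exp (-3) := Real.exp_le_exp.mpr (by linarith)
    have h4 : (4 : ℝ) ≤ Real.exp 3 := by nlinarith [Real.add_one_le_exp (3 : ℝ)]
    have : Real.exp (-3) ≤ 1/4 := by
      rw [Real.exp_neg]
      rw [inv_le_comm₀ (Real.exp_pos 3) (by norm_num)]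
      linarith
    linarith
  have hlt : 2 / (1 - r) * r < 1 := by
    rw [div_mul_eq_mul_div, div_lt_one (by linarith)]
    nlinarith
  linarith

lemma theta4_ne_zero {τ : ℂ} (hτ : 0 < τ.im) : jacobiTheta₂ (1/2) τ ≠ 0 := by
  intro h
  have key : ∀ k : ℕ, jacobiTheta₂ (1/2) (((2 ^ k : ℝ) : ℂ) * τ) = 0 := by
    intro k
    induction k with
    | zero => simpa using h
    | succ k ih =>
      have him : 0 < (((2 ^ k : ℝ) : ℂ) * τ).im := by
        have : (((2 ^ k : ℝ) : ℂ) * τ).im = 2 ^ k * τ.im := by rw [Complex.mul_im, Complex.ofReal_re, Complex.ofReal_im]; ring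
        rw [this]; positivity
      have hki := key_identity him
      rw [ih, mul_zero] at hki
      have h2 : jacobiTheta₂ (1/2) (2 * (((2 ^ k : ℝ) : ℂ) * τ)) = 0 :=
        pow_eq_zero_iff two_ne_zero |>.mp hki.symm
      rw [show (2 : ℂ) * (((2 ^ k : ℝ) : ℂ) * τ) = ((2 ^ (k + 1) : ℝ) : ℂ) * τ by
        push_cast; ring] at h2
      exact h2
  obtain ⟨k, hk⟩ : ∃ k : ℕ, 1 / τ.im < 2 ^ k := pow_unbounded_of_one_lt _ one_lt_two
  have him1 : 1 ≤ (((2 ^ k : ℝ) : ℂ) * τ).im := by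
    have : (((2 ^ k : ℝ) : ℂ) * τ).im = 2 ^ k * τ.im := by rw [Complex.mul_im, Complex.ofReal_re, Complex.ofReal_im]; ring
    rw [this]
    rw [div_lt_iff₀ hτ] at hk
    nlinarith
  exact theta4_ne_zero_of_one_le him1 (key k)

lemma theta3_ne_zero {τ : ℂ} (hτ : 0 < τ.im) : jacobiTheta₂ 0 τ ≠ 0 := by
  intro h
  have h2τ : 0 < (2 * τ).im := by
    have : (2 * τ).im = 2 * τ.im := by simp
    rw [this]; positivity
  have hki := key_identity hτ
  rw [h, zero_mul] at hki
  exact theta4_ne_zero h2τ (pow_eq_zero_iff two_ne_zero |>.mp hki.symm)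

lemma theta2_ne_zero {τ : ℂ} (hτ : 0 < τ.im) : jacobiTheta₂ (τ / 2) τ ≠ 0 := by
  have hτ0 : τ ≠ 0 := fun h => by simp [h] at hτ
  have him : 0 < (-1 / τ).im := by
    have : (-1 / τ).im = τ.im / Complex.normSq τ := by
      rw [neg_div, neg_im, one_div, inv_im]
      ring
    rw [this]
    exact div_pos hτ (Complex.normSq_pos.mpr hτ0)
  rw [jacobiTheta₂_functional_equation (τ / 2) τ]
  rw [show (τ / 2) / τ = 1/2 by field_simp]
  refine mul_ne_zero (mul_ne_zero ?_ (Complex.exp_ne_zero _)) (theta4_ne_zero him)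
  rw [one_div, Ne, inv_eq_zero, cpow_eq_zero_iff, not_and_or]
  exact Or.inl (mul_ne_zero (neg_ne_zero.mpr I_ne_zero) hτ0)


end Stmt7

end

open Stmt7 in
/-- Nonvanishing of the even genus-1 theta constants `θ[a;b](0|τ)` with
half-integer characteristics `a, b ∈ {0, 1/2}`, `(a,b) ≠ (1/2,1/2)`, for `τ`
in the upper half-plane. -/
theorem stmt7 (τ : ℂ) (hτ : 0 < τ.im) (a b : ℝ)
    (ha : a = 0 ∨ a = 1 / 2) (hb : b = 0 ∨ b = 1 / 2)
    (hab : ¬(a = 1 / 2 ∧ b = 1 / 2)) :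
    ∑' n : ℤ, Complex.exp ((Real.pi : ℂ) * Complex.I * ((n : ℂ) + (a : ℂ)) ^ 2 * τ
      + 2 * (Real.pi : ℂ) * Complex.I * ((n : ℂ) + (a : ℂ)) * (b : ℂ)) ≠ 0 := by
  rcases ha with rfl | rfl
  · rcases hb with rfl | rfl
    · have he : (∑' n : ℤ, Complex.exp ((Real.pi : ℂ) * Complex.I * ((n : ℂ) + ((0:ℝ) : ℂ)) ^ 2 * τ
          + 2 * (Real.pi : ℂ) * Complex.I * ((n : ℂ) + ((0:ℝ) : ℂ)) * ((0:ℝ) : ℂ)))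
          = jacobiTheta₂ 0 τ := by
        unfold jacobiTheta₂ jacobiTheta₂_term
        exact tsum_congr fun n => by congr 1; push_cast; ring
      rw [he]
      exact theta3_ne_zero hτ
    · have he : (∑' n : ℤ, Complex.exp ((Real.pi : ℂ) * Complex.I * ((n : ℂ) + ((0:ℝ) : ℂ)) ^ 2 * τ
          + 2 * (Real.pi : ℂ) * Complex.I * ((n : ℂ) + ((0:ℝ) : ℂ)) * ((1/2:ℝ) : ℂ)))
          = jacobiTheta₂ (1/2) τ := by
        unfold jacobiTheta₂ jacobiTheta₂_term
        exact tsum_congr fun n => by congr 1; push_cast; ring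
      rw [he]
      exact theta4_ne_zero hτ
  · rcases hb with rfl | rfl
    · have he : (∑' n : ℤ, Complex.exp ((Real.pi : ℂ) * Complex.I * ((n : ℂ) + ((1/2:ℝ) : ℂ)) ^ 2 * τ
          + 2 * (Real.pi : ℂ) * Complex.I * ((n : ℂ) + ((1/2:ℝ) : ℂ)) * ((0:ℝ) : ℂ)))
          = Complex.exp ((Real.pi : ℂ) * Complex.I * τ / 4) * jacobiTheta₂ (τ / 2) τ := by
        unfold jacobiTheta₂ jacobiTheta₂_term
        rw [← tsum_mul_left]
        exact tsum_congr fun n => by rw [← Complex.exp_add]; congr 1; push_cast; ring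
      rw [he]
      exact mul_ne_zero (Complex.exp_ne_zero _) (theta2_ne_zero hτ)
    · exact absurd ⟨rfl, rfl⟩ hab
end
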